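/- arXiv:2412.13928 — 5 statements merged into one kernel-verified Lean document; each statement's English description precedes it below -/
import Mathlib

section
/- Let f : ℝ^d → ℝ be differentiable with a global minimizer x⋆, and suppose f satisfies the Polyak–Łojasiewicz inequality with parameter α > 0: f(x) − f(x⋆) ≤ (1/(2α))‖∇f(x)‖² for all x. Let P : [0,∞) → ℝ^{d×d} be a family of positive semidefinite matrices, and let x : [0,∞) → ℝ^d be differentiable with x'(t) = −P_t ∇f(x_t) for all t ≥ 0. Let m : [0,∞) → ℝ be continuous with 0 ≤ m_t and m_t · ‖∇f(x_t)‖² ≤ ⟨∇f(x_t), P_t ∇f(x_t)⟩ for all t. Then for all t ≥ 0, f(x_t) − f(x⋆) ≤ exp(−α ∫₀ᵗ m_s ds) · (f(x_0) − f(x⋆)). -/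
open scoped RealInnerProductSpace
open Matrix MeasureTheory

/-- Matrix–vector multiplication viewed as a map on Euclidean space. -/
noncomputable def mv {d : ℕ} (A : Matrix (Fin d) (Fin d) ℝ) (x : EuclideanSpace ℝ (Fin d)) :
    EuclideanSpace ℝ (Fin d) := WithLp.toLp 2 (A.mulVec x)

/-- Quadratic form `xᵀ B x`, i.e. the squared norm `‖x‖_B²`. -/
noncomputable def qf {d : ℕ} (B : Matrix (Fin d) (Fin d) ℝ) (x : EuclideanSpace ℝ (Fin d)) : ℝ :=
  ⟪x, mv B x⟫

/-- The norm `‖x‖_B = √(xᵀ B x)`. -/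
noncomputable def bnorm {d : ℕ} (B : Matrix (Fin d) (Fin d) ℝ) (x : EuclideanSpace ℝ (Fin d)) : ℝ :=
  Real.sqrt (qf B x)

/-- continuous-time convergence of Euclidean subspace gradient flow
(the deterministic part of Proposition 1). -/
theorem subspace_gradient_flow_convergence {d : ℕ}
    (f : EuclideanSpace ℝ (Fin d) → ℝ) (hf : Differentiable ℝ f)
    (xstar : EuclideanSpace ℝ (Fin d)) (hmin : ∀ x, f xstar ≤ f x)
    (α : ℝ) (hα : 0 < α)
    (hPL : ∀ x, f x - f xstar ≤ (1 / (2 * α)) * ‖gradient f x‖ ^ 2)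
    (P : ℝ → Matrix (Fin d) (Fin d) ℝ) (hP : ∀ t, 0 ≤ t → (P t).PosSemidef)
    (x : ℝ → EuclideanSpace ℝ (Fin d))
    (hx : ∀ t, 0 ≤ t → HasDerivAt x (-(mv (P t) (gradient f (x t)))) t)
    (m : ℝ → ℝ) (hmcont : ContinuousOn m (Set.Ici 0))
    (hm0 : ∀ t, 0 ≤ t → 0 ≤ m t)
    (hmP : ∀ t, 0 ≤ t →
      m t * ‖gradient f (x t)‖ ^ 2 ≤ ⟪gradient f (x t), mv (P t) (gradient f (x t))⟫)
    (t : ℝ) (ht : 0 ≤ t) :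
    f (x t) - f xstar ≤ Real.exp (-α * ∫ s in (0:ℝ)..t, m s) * (f (x 0) - f xstar) := by
  rcases eq_or_lt_of_le ht with rfl | htpos
  · simp
  set F : ℝ → ℝ := fun s => ∫ u in (0:ℝ)..s, m u with hFdef
  set g : ℝ → ℝ := fun s => f (x s) - f xstar with hgdef
  set h : ℝ → ℝ := fun s => g s * Real.exp (α * F s) with hhdef
  set h' : ℝ → ℝ := fun s =>
    ⟪gradient f (x s), -(mv (P s) (gradient f (x s)))⟫ * Real.exp (α * F s) +
      g s * (Real.exp (α * F s) * (α * m s)) with hh'def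
  -- continuity of x on Ici 0
  have hxcont : ContinuousOn x (Set.Ici 0) := fun s hs =>
    (hx s hs).continuousAt.continuousWithinAt
  -- continuity of h on Icc 0 t
  have hgc : ContinuousOn g (Set.Icc 0 t) :=
    ((hf.continuous.comp_continuousOn (hxcont.mono Set.Icc_subset_Ici_self)).sub
      continuousOn_const)
  have hmInt : MeasureTheory.IntegrableOn m (Set.uIcc 0 t) := by
    rw [Set.uIcc_of_le ht]
    exact (hmcont.mono Set.Icc_subset_Ici_self).integrableOn_Icc
  have hFc : ContinuousOn F (Set.Icc 0 t) := by
    have := intervalIntegral.continuousOn_primitive_interval (a := 0) (b := t)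
      (μ := volume) (f := m) hmInt
    rwa [Set.uIcc_of_le ht] at this
  have hhc : ContinuousOn h (Set.Icc 0 t) :=
    hgc.mul ((Real.continuous_exp.comp_continuousOn (hFc.const_smul α)))
  -- derivative of h on the interior
  have hderiv : ∀ s ∈ interior (Set.Icc 0 t),
      HasDerivWithinAt h (h' s) (interior (Set.Icc 0 t)) s := by
    intro s hs
    rw [interior_Icc] at hs
    have hs0 : (0:ℝ) < s := hs.1
    have hFd : HasDerivAt F (m s) s := by
      refine intervalIntegral.integral_hasDerivAt_right
        ((hmcont.mono ?_).intervalIntegrable) ?_ ?_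
      · rw [Set.uIcc_of_le hs0.le]; exact Set.Icc_subset_Ici_self
      · exact ContinuousOn.stronglyMeasurableAtFilter isOpen_Ioi
          (hmcont.mono Set.Ioi_subset_Ici_self) s hs0
      · exact (hmcont s hs0.le).continuousAt (Ici_mem_nhds hs0)
    have hgd : HasDerivAt g (⟪gradient f (x s), -(mv (P s) (gradient f (x s)))⟫) s := by
      have hcomp := ((hf (x s)).hasGradientAt.hasFDerivAt).comp_hasDerivAt s (hx s hs0.le)
      have : (InnerProductSpace.toDual ℝ _ (gradient f (x s)))
          (-(mv (P s) (gradient f (x s)))) = ⟪gradient f (x s), -(mv (P s) (gradient f (x s)))⟫ :=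
        InnerProductSpace.toDual_apply_apply
      rw [this] at hcomp
      exact hcomp.sub_const _
    have hhd : HasDerivAt h (h' s) s := hgd.mul ((hFd.const_mul α).exp)
    exact hhd.hasDerivWithinAt
  -- the derivative is nonpositive
  have hnonpos : ∀ s ∈ interior (Set.Icc 0 t), h' s ≤ 0 := by
    intro s hs
    rw [interior_Icc] at hs
    have hs0 : (0:ℝ) ≤ s := hs.1.le
    set G := ‖gradient f (x s)‖ ^ 2 with hGdef
    have hG0 : 0 ≤ G := by positivity
    have hinner : ⟪gradient f (x s), -(mv (P s) (gradient f (x s)))⟫ ≤ -(m s * G) := by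
      rw [inner_neg_right]
      exact neg_le_neg (hmP s hs0)
    have hgle : g s ≤ 1 / (2 * α) * G := hPL (x s)
    have hαm : 0 ≤ α * m s := mul_nonneg hα.le (hm0 s hs0)
    have h2 : α * m s * g s ≤ m s / 2 * G := by
      calc α * m s * g s ≤ α * m s * (1 / (2 * α) * G) :=
            mul_le_mul_of_nonneg_left hgle hαm
        _ = m s / 2 * G := by field_simp
    have hsum : ⟪gradient f (x s), -(mv (P s) (gradient f (x s)))⟫ + α * m s * g s ≤ 0 := by
      have hmG : 0 ≤ m s * G := mul_nonneg (hm0 s hs0) hG0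
      calc ⟪gradient f (x s), -(mv (P s) (gradient f (x s)))⟫ + α * m s * g s ≤
          -(m s * G) + m s / 2 * G := add_le_add hinner h2
        _ = -(m s * G / 2) := by ring
        _ ≤ 0 := neg_nonpos.mpr (div_nonneg hmG (by norm_num))
    have hexp : (0:ℝ) < Real.exp (α * F s) := Real.exp_pos _
    have : h' s = Real.exp (α * F s) *
        (⟪gradient f (x s), -(mv (P s) (gradient f (x s)))⟫ + α * m s * g s) := by
      simp only [hh'def]; ring
    rw [this]
    exact mul_nonpos_of_nonneg_of_nonpos hexp.le hsum
  have hanti : AntitoneOn h (Set.Icc 0 t) :=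
    antitoneOn_of_hasDerivWithinAt_nonpos (convex_Icc 0 t) hhc hderiv hnonpos
  have hht : h t ≤ h 0 :=
    hanti (Set.left_mem_Icc.mpr ht) (Set.right_mem_Icc.mpr ht) ht
  have hF0 : F 0 = 0 := intervalIntegral.integral_same
  have hh0 : h 0 = g 0 := by simp [hhdef, hF0]
  rw [hh0] at hht
  have key : g t ≤ Real.exp (-(α * F t)) * (g 0) := by
    calc g t = (g t * Real.exp (α * F t)) * Real.exp (-(α * F t)) := by
          rw [mul_assoc, ← Real.exp_add, add_neg_cancel, Real.exp_zero, mul_one]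
      _ ≤ g 0 * Real.exp (-(α * F t)) := mul_le_mul_of_nonneg_right hht (Real.exp_pos _).le
      _ = Real.exp (-(α * F t)) * g 0 := mul_comm _ _
  rw [neg_mul]
  exact key
end

section
/- Let A ∈ ℝ^{d×d} be symmetric positive definite and let V : ℝ^d → ℝ be differentiable and m-relatively strongly convex with respect to ‖·‖_{A⁻¹} with m > 0. Let Z, Z' : [0,∞) → ℝ^d be curves such that t ↦ Z_t − Z'_t is differentiable with derivative d/dt (Z_t − Z'_t) = −A(∇V(Z_t) − ∇V(Z'_t)) for all t (as holds for two solutions of the preconditioned Langevin diffusion dX_t = −A∇V(X_t)dt + √2 A^{1/2} dB_t driven by the same Brownian motion). Then for all t ≥ 0, ‖Z_t − Z'_t‖²_{A⁻¹} ≤ exp(−m t) · ‖Z_0 − Z'_0‖²_{A⁻¹}. -/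
open scoped RealInnerProductSpace
open Matrix MeasureTheory

noncomputable def mvCLM {d : ℕ} (B : Matrix (Fin d) (Fin d) ℝ) :
    EuclideanSpace ℝ (Fin d) →L[ℝ] EuclideanSpace ℝ (Fin d) :=
  LinearMap.toContinuousLinearMap
    { toFun := mv B
      map_add' := fun x y => by
        show WithLp.toLp 2 (B.mulVec (WithLp.ofLp (x + y))) = WithLp.toLp 2 (B.mulVec (WithLp.ofLp x)) + WithLp.toLp 2 (B.mulVec (WithLp.ofLp y))
        rw [WithLp.ofLp_add, Matrix.mulVec_add, WithLp.toLp_add]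
      map_smul' := fun c x => by
        show WithLp.toLp 2 (B.mulVec (WithLp.ofLp (c • x))) = c • WithLp.toLp 2 (B.mulVec (WithLp.ofLp x))
        rw [WithLp.ofLp_smul, Matrix.mulVec_smul, WithLp.toLp_smul] }

lemma mvCLM_apply {d : ℕ} (B : Matrix (Fin d) (Fin d) ℝ) (x : EuclideanSpace ℝ (Fin d)) :
    mvCLM B x = mv B x := rfl

lemma inner_mv_eq {d : ℕ} (B : Matrix (Fin d) (Fin d) ℝ) (x y : EuclideanSpace ℝ (Fin d)) :
    ⟪x, mv B y⟫ = dotProduct x (B.mulVec y) := by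
  simp [PiLp.inner_apply, mv, dotProduct, RCLike.inner_apply, mul_comm]

lemma inner_mv_symm {d : ℕ} {B : Matrix (Fin d) (Fin d) ℝ} (hB : B.IsHermitian)
    (x y : EuclideanSpace ℝ (Fin d)) : ⟪x, mv B y⟫ = ⟪mv B x, y⟫ := by
  have hsym : Bᵀ = B := by
    rw [← Matrix.conjTranspose_eq_transpose_of_trivial]; exact hB
  rw [inner_mv_eq, real_inner_comm, inner_mv_eq]
  rw [Matrix.dotProduct_mulVec y B x, ← Matrix.mulVec_transpose, hsym,
    dotProduct_comm]

lemma qf_neg {d : ℕ} (B : Matrix (Fin d) (Fin d) ℝ) (v : EuclideanSpace ℝ (Fin d)) :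
    qf B (-v) = qf B v := by
  have h : mv B (-v) = -(mv B v) := by
    show WithLp.toLp 2 (B.mulVec (WithLp.ofLp (-v))) = -WithLp.toLp 2 (B.mulVec (WithLp.ofLp v))
    rw [WithLp.ofLp_neg, Matrix.mulVec_neg, WithLp.toLp_neg]
  rw [qf, qf, h, inner_neg_neg]

/-- contraction of the preconditioned Langevin diffusion under
synchronous coupling (Lemma 1), stated at the level of the coupled trajectories. -/
theorem preconditioned_langevin_contraction {d : ℕ}
    (A : Matrix (Fin d) (Fin d) ℝ) (hA : A.PosDef)
    (V : EuclideanSpace ℝ (Fin d) → ℝ) (hV : Differentiable ℝ V)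
    (m : ℝ) (hm : 0 < m)
    (hconv : ∀ x y, V x + ⟪gradient V x, y - x⟫ + (m / 2) * qf A⁻¹ (y - x) ≤ V y)
    (Z Z' : ℝ → EuclideanSpace ℝ (Fin d))
    (hZ : ∀ t, 0 ≤ t → HasDerivAt (fun s => Z s - Z' s)
      (-(mv A (gradient V (Z t) - gradient V (Z' t)))) t)
    (t : ℝ) (ht : 0 ≤ t) :
    qf A⁻¹ (Z t - Z' t) ≤ Real.exp (-m * t) * qf A⁻¹ (Z 0 - Z' 0) := by
  have hdet : IsUnit A.det := isUnit_iff_ne_zero.mpr hA.det_pos.ne'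
  have hBA : A⁻¹ * A = 1 := Matrix.nonsing_inv_mul A hdet
  have hBherm : (A⁻¹).IsHermitian := hA.isHermitian.inv
  -- nonnegativity of the quadratic form
  have hfnn : ∀ x : EuclideanSpace ℝ (Fin d), 0 ≤ qf A⁻¹ x := by
    intro x
    have := (hA.inv.posSemidef).re_dotProduct_nonneg x
    simpa [qf, inner_mv_eq] using this
  -- strong monotonicity of the gradient
  have hmono : ∀ s : ℝ, m * qf A⁻¹ (Z s - Z' s)
      ≤ ⟪Z s - Z' s, gradient V (Z s) - gradient V (Z' s)⟫ := by
    intro s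
    have h1 := hconv (Z s) (Z' s)
    have h2 := hconv (Z' s) (Z s)
    have hneg : Z' s - Z s = -(Z s - Z' s) := by abel
    have hqneg : qf A⁻¹ (-(Z s - Z' s)) = qf A⁻¹ (Z s - Z' s) := qf_neg _ _
    rw [hneg, hqneg, inner_neg_right] at h1
    have hexp : ⟪Z s - Z' s, gradient V (Z s) - gradient V (Z' s)⟫
        = ⟪gradient V (Z s), Z s - Z' s⟫ - ⟪gradient V (Z' s), Z s - Z' s⟫ := by
      rw [real_inner_comm, inner_sub_left]
    rw [hexp]
    linarith
  -- derivative of the quadratic form along the trajectory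
  have hf : ∀ s : ℝ, 0 ≤ s → HasDerivAt (fun u => qf A⁻¹ (Z u - Z' u))
      (-2 * ⟪Z s - Z' s, gradient V (Z s) - gradient V (Z' s)⟫) s := by
    intro s hs
    have hWd := hZ s hs
    have h1 : HasDerivAt (fun u => mvCLM A⁻¹ (Z u - Z' u))
        (mvCLM A⁻¹ (-(mv A (gradient V (Z s) - gradient V (Z' s))))) s :=
      (mvCLM A⁻¹).hasFDerivAt.comp_hasDerivAt s hWd
    have hval : mvCLM A⁻¹ (-(mv A (gradient V (Z s) - gradient V (Z' s))))
        = -(gradient V (Z s) - gradient V (Z' s)) := by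
      rw [mvCLM_apply]
      show WithLp.toLp 2 ((A⁻¹).mulVec (WithLp.ofLp (-(mv A (gradient V (Z s) - gradient V (Z' s))))))
          = -(gradient V (Z s) - gradient V (Z' s))
      rw [WithLp.ofLp_neg, mv, WithLp.ofLp_toLp, Matrix.mulVec_neg, Matrix.mulVec_mulVec, hBA,
        Matrix.one_mulVec, WithLp.toLp_neg, WithLp.toLp_ofLp]
    rw [hval] at h1
    have h2 := hWd.inner ℝ h1
    have heq : (fun u => ⟪Z u - Z' u, mvCLM A⁻¹ (Z u - Z' u)⟫)
        = fun u => qf A⁻¹ (Z u - Z' u) := rfl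
    rw [heq] at h2
    have hval' : mv A⁻¹ (-(mv A (gradient V (Z s) - gradient V (Z' s))))
        = -(gradient V (Z s) - gradient V (Z' s)) := hval
    refine h2.congr_deriv ?_
    rw [inner_neg_right, mvCLM_apply,
      real_inner_comm (mv A⁻¹ (Z s - Z' s)) (-(mv A (gradient V (Z s) - gradient V (Z' s)))),
      ← inner_mv_symm hBherm, hval', inner_neg_right]
    ring
  -- the auxiliary function exp(m s) * f s is antitone on [0, t]
  rcases ht.eq_or_lt with h0 | h0
  · subst h0; simp
  have hh : ∀ s : ℝ, 0 ≤ s → HasDerivAt (fun u => Real.exp (m * u) * qf A⁻¹ (Z u - Z' u))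
      (Real.exp (m * s) * (m * qf A⁻¹ (Z s - Z' s)
        + (-2 * ⟪Z s - Z' s, gradient V (Z s) - gradient V (Z' s)⟫))) s := by
    intro s hs
    have he : HasDerivAt (fun u : ℝ => Real.exp (m * u)) (m * Real.exp (m * s)) s := by
      have := (Real.hasDerivAt_exp (m * s)).comp s ((hasDerivAt_id s).const_mul m)
      exact this.congr_deriv (by ring)
    have := he.mul (hf s hs)
    refine this.congr_deriv ?_
    ring
  have hanti : AntitoneOn (fun u => Real.exp (m * u) * qf A⁻¹ (Z u - Z' u)) (Set.Icc 0 t) := by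
    apply antitoneOn_of_deriv_nonpos (convex_Icc 0 t)
    · intro s hs
      exact (hh s hs.1).continuousAt.continuousWithinAt
    · intro s hs
      rw [interior_Icc] at hs
      exact (hh s hs.1.le).differentiableAt.differentiableWithinAt
    · intro s hs
      rw [interior_Icc] at hs
      rw [(hh s hs.1.le).deriv]
      have := hmono s
      have hfn := hfnn (Z s - Z' s)
      have hex : (0:ℝ) < Real.exp (m * s) := Real.exp_pos _
      have hsum : m * qf A⁻¹ (Z s - Z' s)
          + -2 * ⟪Z s - Z' s, gradient V (Z s) - gradient V (Z' s)⟫ ≤ 0 := by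
        linarith [mul_nonneg hm.le hfn]
      exact mul_nonpos_of_nonneg_of_nonpos hex.le hsum
  have hkey := hanti (Set.left_mem_Icc.mpr ht) (Set.right_mem_Icc.mpr ht) ht
  simp only [mul_zero, Real.exp_zero, one_mul] at hkey
  calc qf A⁻¹ (Z t - Z' t)
      = Real.exp (-m * t) * (Real.exp (m * t) * qf A⁻¹ (Z t - Z' t)) := by
        rw [← mul_assoc, ← Real.exp_add]
        simp
    _ ≤ Real.exp (-m * t) * qf A⁻¹ (Z 0 - Z' 0) :=
        mul_le_mul_of_nonneg_left hkey (Real.exp_nonneg _)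
end

section
/- Let A ∈ ℝ^{d×d} be symmetric positive definite, let V : ℝ^d → ℝ be differentiable with ‖∇V(x) − ∇V(y)‖_A ≤ M ‖x − y‖_{A⁻¹} for all x, y ∈ ℝ^d, and let W ∈ ℝ^{d×r} be semiorthogonal (WᵀW = I_r) with A(WWᵀ) = (WWᵀ)A. Then for every x ∈ ℝ^d and δ ∈ ℝ^d, setting y = x + WWᵀδ, one has ‖WWᵀ(∇V(x) − ∇V(y))‖_A ≤ M ‖WWᵀ(x − y)‖_{A⁻¹}. In other words, the directional smoothness constant M(W) along the column span of W is at most M. -/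
open scoped RealInnerProductSpace
open Matrix MeasureTheory

/-- Conjugation identity: `(Cg)ᵀ A (Cg) = gᵀ (Cᵀ A C) g` for symmetric `A`. -/
lemma quad_aux {d : ℕ} (C A : Matrix (Fin d) (Fin d) ℝ) (h : Aᵀ = A) (g : Fin d → ℝ) :
    (C *ᵥ g) ⬝ᵥ A *ᵥ (C *ᵥ g) = g ⬝ᵥ (Cᵀ * A * C) *ᵥ g := by
  rw [Matrix.mulVec_mulVec, ← Matrix.vecMul_transpose, Matrix.dotProduct_mulVec,
    Matrix.vecMul_vecMul, ← Matrix.mulVec_transpose, dotProduct_comm,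
    Matrix.transpose_mul, Matrix.transpose_mul, Matrix.transpose_transpose, h]

lemma qf_eq {d : ℕ} (B : Matrix (Fin d) (Fin d) ℝ) (x : EuclideanSpace ℝ (Fin d)) :
    qf B x = (x : Fin d → ℝ) ⬝ᵥ B *ᵥ (x : Fin d → ℝ) := by
  simp [qf, mv, PiLp.inner_apply, dotProduct, mul_comm]

/-- Projecting by a symmetric idempotent commuting with `A` decreases the `A`-quadratic form. -/
lemma qf_proj_le {d : ℕ} (A : Matrix (Fin d) (Fin d) ℝ) (hA : A.PosDef)
    (P : Matrix (Fin d) (Fin d) ℝ) (hP : Pᵀ = P) (hPP : P * P = P)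
    (hc : A * P = P * A) (g : EuclideanSpace ℝ (Fin d)) :
    qf A (mv P g) ≤ qf A g := by
  have hAs : Aᵀ = A := hA.isHermitian.eq
  have hQ : (1 - P)ᵀ = 1 - P := by rw [Matrix.transpose_sub, Matrix.transpose_one, hP]
  have key : qf A g - qf A (mv P g)
      = ((1 - P) *ᵥ (g : Fin d → ℝ)) ⬝ᵥ A *ᵥ ((1 - P) *ᵥ (g : Fin d → ℝ)) := by
    rw [qf_eq, qf_eq]
    show (g : Fin d → ℝ) ⬝ᵥ A *ᵥ g - (P *ᵥ (g : Fin d → ℝ)) ⬝ᵥ A *ᵥ (P *ᵥ g) = _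
    rw [quad_aux P A hAs, quad_aux (1 - P) A hAs, hQ, hP]
    have h1 : P * A * P = A * P := by rw [← hc, Matrix.mul_assoc, hPP]
    have h2 : (1 - P) * A * (1 - P) = A - A * P := by
      have e1 : P * A = A * P := hc.symm
      rw [Matrix.sub_mul, Matrix.one_mul, Matrix.mul_sub, Matrix.mul_one, Matrix.sub_mul, e1,
        Matrix.mul_assoc, hPP, sub_self, sub_zero]
    rw [h1, h2, Matrix.sub_mulVec, dotProduct_sub]
  have pos : 0 ≤ ((1 - P) *ᵥ (g : Fin d → ℝ)) ⬝ᵥ A *ᵥ ((1 - P) *ᵥ (g : Fin d → ℝ)) := by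
    have := hA.posSemidef.dotProduct_mulVec_nonneg ((1 - P) *ᵥ (g : Fin d → ℝ))
    simpa using this
  linarith [key ▸ pos]

/-- the directional smoothness constant `M(W)` along the column span of a
semiorthogonal `W` commuting with the preconditioner `A` is at most the global relative
smoothness constant `M` (the claim `M_k(U) ≤ M_k` in Assumption 5). -/
theorem directional_smoothness_le {d r : ℕ}
    (A : Matrix (Fin d) (Fin d) ℝ) (hA : A.PosDef)
    (V : EuclideanSpace ℝ (Fin d) → ℝ) (hV : Differentiable ℝ V)
    (M : ℝ)
    (hlip : ∀ x y, bnorm A (gradient V x - gradient V y) ≤ M * bnorm A⁻¹ (x - y))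
    (W : Matrix (Fin d) (Fin r) ℝ) (hW : Wᵀ * W = 1)
    (hcomm : A * (W * Wᵀ) = (W * Wᵀ) * A)
    (x δ : EuclideanSpace ℝ (Fin d)) :
    bnorm A (mv (W * Wᵀ) (gradient V x - gradient V (x + mv (W * Wᵀ) δ))) ≤
      M * bnorm A⁻¹ (mv (W * Wᵀ) (x - (x + mv (W * Wᵀ) δ))) := by
  set P := W * Wᵀ with hPdef
  have hP : Pᵀ = P := by
    rw [hPdef, Matrix.transpose_mul, Matrix.transpose_transpose]
  have hPP : P * P = P := by
    rw [hPdef, Matrix.mul_assoc, ← Matrix.mul_assoc Wᵀ, hW, Matrix.one_mul]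
  set y := x + mv P δ with hy
  -- `P (x - y) = x - y` since `x - y = P(-δ)` and `P` is idempotent
  have hfix : mv P (x - y) = x - y := by
    have : (x - y : EuclideanSpace ℝ (Fin d)) = mv P (-δ) := by
      simp only [hy, mv]
      rw [WithLp.ofLp_neg, Matrix.mulVec_neg, WithLp.toLp_neg]
      abel
    rw [this]
    show WithLp.toLp 2 (P *ᵥ (P *ᵥ (-δ))) = WithLp.toLp 2 (P *ᵥ (-δ))
    rw [Matrix.mulVec_mulVec, hPP]
  calc bnorm A (mv P (gradient V x - gradient V y))
      ≤ bnorm A (gradient V x - gradient V y) := by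
        exact Real.sqrt_le_sqrt (qf_proj_le A hA P hP hPP hcomm _)
    _ ≤ M * bnorm A⁻¹ (x - y) := hlip x y
    _ = M * bnorm A⁻¹ (mv P (x - y)) := by rw [hfix]
end

section
/- Let A ∈ ℝ^{d×d} be symmetric positive definite, let W ∈ ℝ^{d×r} be semiorthogonal (WᵀW = I_r) with AW = WD for a diagonal matrix D with positive diagonal entries, and let H ∈ ℝ^{d×d} be symmetric with WᵀHW ⪯ M · WᵀA⁻¹W (Loewner order on r×r symmetric matrices) for some M ≥ 0. Then Tr(WWᵀAWWᵀ H) ≤ M · r. -/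
open scoped RealInnerProductSpace
open Matrix MeasureTheory

lemma psd_diag_nonneg {r : ℕ} {P : Matrix (Fin r) (Fin r) ℝ} (hP : P.PosSemidef) (i : Fin r) :
    0 ≤ P i i := by
  have := hP.dotProduct_mulVec_nonneg (Pi.single i 1)
  simpa [dotProduct, Matrix.mulVec, Pi.single_apply] using this

/-- the key matrix trace bound in the proof of Lemma 3:
`Tr(W Wᵀ A W Wᵀ H) ≤ M r` when `Wᵀ H W ⪯ M · Wᵀ A⁻¹ W`. -/
theorem eigenblock_trace_bound {d r : ℕ}
    (A : Matrix (Fin d) (Fin d) ℝ) (hA : A.PosDef)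
    (W : Matrix (Fin d) (Fin r) ℝ) (hW : Wᵀ * W = 1)
    (e : Fin r → ℝ) (he : ∀ i, 0 < e i)
    (hAW : A * W = W * Matrix.diagonal e)
    (H : Matrix (Fin d) (Fin d) ℝ) (hH : H.IsSymm)
    (M : ℝ) (hM : 0 ≤ M)
    (hHle : (M • (Wᵀ * A⁻¹ * W) - Wᵀ * H * W).PosSemidef) :
    (W * Wᵀ * A * (W * Wᵀ) * H).trace ≤ M * r := by
  have hde : (Matrix.diagonal e) * (Matrix.diagonal fun i => (e i)⁻¹) = 1 := by
    rw [Matrix.diagonal_mul_diagonal]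
    convert Matrix.diagonal_one with i
    exact mul_inv_cancel₀ (he i).ne'
  -- A⁻¹ W = W diag e⁻¹
  have hinv : A⁻¹ * W = W * Matrix.diagonal fun i => (e i)⁻¹ := by
    have h1 : A⁻¹ * (A * W) = W := by
      rw [← Matrix.mul_assoc, Matrix.nonsing_inv_mul A hA.det_pos.ne'.isUnit, Matrix.one_mul]
    rw [hAW, ← Matrix.mul_assoc] at h1
    calc A⁻¹ * W = A⁻¹ * W * ((Matrix.diagonal e) * (Matrix.diagonal fun i => (e i)⁻¹)) := by
          rw [hde, Matrix.mul_one]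
      _ = (A⁻¹ * W * Matrix.diagonal e) * (Matrix.diagonal fun i => (e i)⁻¹) := by
          simp only [Matrix.mul_assoc]
      _ = W * Matrix.diagonal fun i => (e i)⁻¹ := by rw [h1]
  have hWAinvW : Wᵀ * A⁻¹ * W = Matrix.diagonal fun i => (e i)⁻¹ := by
    rw [Matrix.mul_assoc, hinv, ← Matrix.mul_assoc, hW, Matrix.one_mul]
  have hWAW : Wᵀ * A * W = Matrix.diagonal e := by
    rw [Matrix.mul_assoc, hAW, ← Matrix.mul_assoc, hW, Matrix.one_mul]
  -- rewrite the trace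
  have htr : (W * Wᵀ * A * (W * Wᵀ) * H).trace
      = ((Matrix.diagonal e) * (Wᵀ * H * W)).trace := by
    rw [show W * Wᵀ * A * (W * Wᵀ) * H = W * (Wᵀ * A * W * (Wᵀ * H)) by
      simp only [Matrix.mul_assoc]]
    rw [Matrix.trace_mul_comm, hWAW]
    simp only [Matrix.mul_assoc]
  set P := M • (Wᵀ * A⁻¹ * W) - Wᵀ * H * W with hP
  have hKeq : Wᵀ * H * W = M • (Matrix.diagonal fun i => (e i)⁻¹) - P := by
    rw [hP, hWAinvW]; ring_nf; abel
  rw [htr, hKeq, Matrix.mul_sub, Matrix.trace_sub]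
  have h1 : ((Matrix.diagonal e) * (M • Matrix.diagonal fun i => (e i)⁻¹)).trace = M * r := by
    rw [Matrix.mul_smul, hde, Matrix.trace_smul, Matrix.trace_one]
    simp [mul_comm]
  have h2 : 0 ≤ ((Matrix.diagonal e) * P).trace := by
    rw [Matrix.trace]
    apply Finset.sum_nonneg
    intro i _
    have : ((Matrix.diagonal e) * P).diag i = e i * P i i := by
      simp [Matrix.diag, Matrix.mul_apply, Matrix.diagonal_apply]
    rw [this]
    exact mul_nonneg (he i).le (psd_diag_nonneg hHle i)
  linarith
end

section
/- Let d = r·K with r, K positive integers, and let U₁, …, U_K ∈ ℝ^{d×r} be semiorthogonal (UᵢᵀUᵢ = I_r) with Σᵢ UᵢUᵢᵀ = I_d. Let f : ℝ^d → ℝ be differentiable, β-smooth (‖∇f(x) − ∇f(y)‖ ≤ β‖x−y‖ for all x, y) and satisfy the Polyak–Łojasiewicz inequality with parameter α > 0 with minimum value f⋆. Set the step size h = r/(dβ). Then for every x ∈ ℝ^d, the expected one-step subspace descent satisfies (1/K) Σᵢ f(x − h·(d/r)·UᵢUᵢᵀ∇f(x)) − f⋆ ≤ (1 − rα/(dβ))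 (f(x) − f⋆). -/
open scoped RealInnerProductSpace
open Matrix MeasureTheory

lemma descent_lemma {n : ℕ} (f : EuclideanSpace ℝ (Fin n) → ℝ) (hf : Differentiable ℝ f)
    (β : ℝ)
    (hsmooth : ∀ x y, ‖gradient f x - gradient f y‖ ≤ β * ‖x - y‖)
    (x v : EuclideanSpace ℝ (Fin n)) :
    f (x + v) ≤ f x + ⟪gradient f x, v⟫ + β / 2 * ‖v‖ ^ 2 := by
  set φ : ℝ → ℝ := fun t => f (x + t • v) - t * ⟪gradient f x, v⟫ - β / 2 * t ^ 2 * ‖v‖ ^ 2 with hφdef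
  have hline : ∀ t : ℝ, HasDerivAt (fun t : ℝ => x + t • v) v t := fun t => by
    simpa using ((hasDerivAt_id t).smul_const v).const_add x
  have hφ : ∀ t : ℝ, HasDerivAt φ
      (⟪gradient f (x + t • v), v⟫ - ⟪gradient f x, v⟫ - β * t * ‖v‖ ^ 2) t := by
    intro t
    have h1 : HasDerivAt (fun t : ℝ => f (x + t • v)) (⟪gradient f (x + t • v), v⟫) t := by
      have := ((hf (x + t • v)).hasGradientAt.hasFDerivAt).comp_hasDerivAt t (hline t)
      simpa [InnerProductSpace.toDual_apply_apply, Function.comp_def] using this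
    have h2 : HasDerivAt (fun t : ℝ => t * ⟪gradient f x, v⟫) (⟪gradient f x, v⟫) t := by
      simpa using (hasDerivAt_id t).mul_const (⟪gradient f x, v⟫)
    have h3 : HasDerivAt (fun t : ℝ => β / 2 * t ^ 2 * ‖v‖ ^ 2) (β * t * ‖v‖ ^ 2) t := by
      have := ((hasDerivAt_pow 2 t).const_mul (β / 2)).mul_const (‖v‖ ^ 2)
      refine this.congr_deriv ?_
      ring
    exact (h1.sub h2).sub h3
  have hanti : AntitoneOn φ (Set.Icc (0:ℝ) 1) := by
    apply antitoneOn_of_deriv_nonpos (convex_Icc 0 1)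
    · exact Continuous.continuousOn (by
        exact continuous_iff_continuousAt.2 fun t => (hφ t).continuousAt)
    · exact fun t _ => (hφ t).differentiableAt.differentiableWithinAt
    · intro t ht
      rw [interior_Icc] at ht
      rw [(hφ t).deriv]
      have h4 : ⟪gradient f (x + t • v) - gradient f x, v⟫ ≤ β * t * ‖v‖ ^ 2 := by
        calc ⟪gradient f (x + t • v) - gradient f x, v⟫
            ≤ ‖gradient f (x + t • v) - gradient f x‖ * ‖v‖ := real_inner_le_norm _ _
          _ ≤ (β * ‖(x + t • v) - x‖) * ‖v‖ := by
              have := hsmooth (x + t • v) x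
              nlinarith [norm_nonneg v]
          _ = β * t * ‖v‖ ^ 2 := by
              rw [add_sub_cancel_left, norm_smul]
              simp [abs_of_pos ht.1]
              ring
      rw [inner_sub_left] at h4
      linarith
  have key : φ 1 ≤ φ 0 := hanti (by norm_num) (by norm_num) zero_le_one
  simp only [hφdef, one_smul, one_pow, one_mul, zero_smul, add_zero, zero_pow, zero_mul,
    mul_zero, sub_zero] at key
  linarith

lemma inner_eq_dot {d : ℕ} (a b : EuclideanSpace ℝ (Fin d)) :
    ⟪a, b⟫ = (a : Fin d → ℝ) ⬝ᵥ (b : Fin d → ℝ) := by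
  simp [PiLp.inner_apply, dotProduct, mul_comm]

lemma sum_mulVec' {d K : ℕ} (P : Fin K → Matrix (Fin d) (Fin d) ℝ) (g : Fin d → ℝ) :
    (∑ i, P i) *ᵥ g = ∑ i, (P i) *ᵥ g :=
  map_sum (Matrix.mulVec.addMonoidHomLeft g) P Finset.univ

lemma norm_sq_mv {d : ℕ} (P : Matrix (Fin d) (Fin d) ℝ) (hPs : Pᵀ = P) (hPi : P * P = P)
    (g : EuclideanSpace ℝ (Fin d)) : ‖mv P g‖ ^ 2 = qf P g := by
  rw [← real_inner_self_eq_norm_sq, qf, inner_eq_dot, inner_eq_dot]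
  show (P.mulVec g) ⬝ᵥ (P.mulVec g) = (g : Fin d → ℝ) ⬝ᵥ (P.mulVec g)
  rw [Matrix.dotProduct_mulVec, ← Matrix.mulVec_transpose, hPs, Matrix.mulVec_mulVec, hPi]
  exact dotProduct_comm _ _

lemma sum_qf {d K : ℕ} (P : Fin K → Matrix (Fin d) (Fin d) ℝ) (hsum : ∑ i, P i = 1)
    (g : EuclideanSpace ℝ (Fin d)) : ∑ i, qf (P i) g = ‖g‖ ^ 2 := by
  have : ∑ i, qf (P i) g = ⟪g, WithLp.toLp 2 ((∑ i, P i) *ᵥ g)⟫ := by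
    rw [sum_mulVec']
    simp only [qf, inner_eq_dot, mv, WithLp.ofLp_toLp]
    simp only [dotProduct, Finset.sum_apply, Finset.mul_sum]
    rw [Finset.sum_comm]
  rw [this, hsum]
  have : WithLp.toLp 2 ((1 : Matrix (Fin d) (Fin d) ℝ) *ᵥ (g : Fin d → ℝ)) = g := by
    ext j; simp [Matrix.one_mulVec]
  rw [this, real_inner_self_eq_norm_sq]

/-- per-step contraction of Euclidean subspace descent,
`E f(x⁺) − f⋆ ≤ (1 − rα/(dβ))(f(x) − f⋆)`, with the expectation over a uniform
choice among `K` semiorthogonal blocks partitioning `ℝ^d` and scaled projections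
`(d/r) Uᵢ Uᵢᵀ` (quoted in Section 2.4). -/
theorem subspace_descent_contraction {r K : ℕ} (hr : 0 < r) (hK : 0 < K)
    (d : ℕ) (hd : d = r * K)
    (U : Fin K → Matrix (Fin d) (Fin r) ℝ)
    (hU : ∀ i, (U i)ᵀ * U i = 1)
    (hsum : ∑ i, U i * (U i)ᵀ = 1)
    (f : EuclideanSpace ℝ (Fin d) → ℝ) (hf : Differentiable ℝ f)
    (β : ℝ) (hβ : 0 < β)
    (hsmooth : ∀ x y, ‖gradient f x - gradient f y‖ ≤ β * ‖x - y‖)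
    (α : ℝ) (hα : 0 < α)
    (fstar : ℝ) (hmin : ∀ x, fstar ≤ f x) (hatt : ∃ x, f x = fstar)
    (hPL : ∀ x, f x - fstar ≤ (1 / (2 * α)) * ‖gradient f x‖ ^ 2)
    (h : ℝ) (hh : h = (r : ℝ) / (d * β))
    (x : EuclideanSpace ℝ (Fin d)) :
    (1 / (K : ℝ)) *
        ∑ i, f (x - (h * ((d : ℝ) / r)) • mv (U i * (U i)ᵀ) (gradient f x)) - fstar ≤
      (1 - (r : ℝ) * α / (d * β)) * (f x - fstar) := by
  have hrR : (0:ℝ) < r := Nat.cast_pos.2 hr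
  have hKR : (0:ℝ) < K := Nat.cast_pos.2 hK
  have hdR : (0:ℝ) < d := by
    have : 0 < d := by rw [hd]; positivity
    exact_mod_cast this
  set g := gradient f x with hg
  set s := h * ((d : ℝ) / r) with hsdef
  have hs : s = 1 / β := by
    rw [hsdef, hh]
    field_simp
  -- properties of the projections
  have hPs : ∀ i, (U i * (U i)ᵀ)ᵀ = U i * (U i)ᵀ := fun i => by
    rw [Matrix.transpose_mul, Matrix.transpose_transpose]
  have hPi : ∀ i, (U i * (U i)ᵀ) * (U i * (U i)ᵀ) = U i * (U i)ᵀ := fun i => by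
    calc (U i * (U i)ᵀ) * (U i * (U i)ᵀ) = U i * ((U i)ᵀ * U i) * (U i)ᵀ := by
          simp [Matrix.mul_assoc]
      _ = U i * (U i)ᵀ := by rw [hU i, Matrix.mul_one]
  have hqnn : ∀ i, 0 ≤ qf (U i * (U i)ᵀ) g := fun i => by
    rw [← norm_sq_mv _ (hPs i) (hPi i)]; positivity
  -- per-step descent
  have step : ∀ i, f (x - s • mv (U i * (U i)ᵀ) g) ≤ f x - 1 / (2 * β) * qf (U i * (U i)ᵀ) g := by
    intro i
    have := descent_lemma f hf β hsmooth x (-(s • mv (U i * (U i)ᵀ) g))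
    rw [← sub_eq_add_neg] at this
    have hinner : ⟪g, -(s • mv (U i * (U i)ᵀ) g)⟫ = -(s * qf (U i * (U i)ᵀ) g) := by
      rw [inner_neg_right, real_inner_smul_right]
      rfl
    have hnorm : ‖-(s • mv (U i * (U i)ᵀ) g)‖ ^ 2 = s ^ 2 * qf (U i * (U i)ᵀ) g := by
      rw [norm_neg, norm_smul, mul_pow, ← norm_sq_mv _ (hPs i) (hPi i)]
      simp [sq_abs]
    rw [hg] at this ⊢
    rw [hinner, hnorm] at this
    have hβ' : β ≠ 0 := ne_of_gt hβ
    calc f (x - s • mv (U i * (U i)ᵀ) (gradient f x))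
        ≤ f x + -(s * qf (U i * (U i)ᵀ) (gradient f x))
            + β / 2 * (s ^ 2 * qf (U i * (U i)ᵀ) (gradient f x)) := this
      _ = f x - 1 / (2 * β) * qf (U i * (U i)ᵀ) (gradient f x) := by
          rw [hs]; field_simp; ring
  -- sum it up
  have hsum2 : ∑ i, f (x - s • mv (U i * (U i)ᵀ) g)
      ≤ (K : ℝ) * f x - 1 / (2 * β) * ‖g‖ ^ 2 := by
    calc ∑ i, f (x - s • mv (U i * (U i)ᵀ) g)
        ≤ ∑ i, (f x - 1 / (2 * β) * qf (U i * (U i)ᵀ) g) :=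
          Finset.sum_le_sum fun i _ => step i
      _ = (K : ℝ) * f x - 1 / (2 * β) * ∑ i, qf (U i * (U i)ᵀ) g := by
          rw [Finset.sum_sub_distrib, ← Finset.mul_sum]
          simp [mul_comm]
      _ = (K : ℝ) * f x - 1 / (2 * β) * ‖g‖ ^ 2 := by
          rw [sum_qf _ hsum]
  have hPLx := hPL x
  have hgsq : 2 * α * (f x - fstar) ≤ ‖g‖ ^ 2 := by
    rw [hg]
    have h2α : (0:ℝ) < 2 * α := by positivity
    rw [div_mul_eq_mul_div, one_mul, le_div_iff₀ h2α] at hPLx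
    linarith [hPLx]
  -- conclude
  have hKne : (K:ℝ) ≠ 0 := ne_of_gt hKR
  have hcoef : (r : ℝ) * α / (d * β) = α / (K * β) := by
    have : (d : ℝ) = r * K := by exact_mod_cast hd
    rw [this]; field_simp
  rw [hcoef]
  have hmain : (1 / (K : ℝ)) * ∑ i, f (x - s • mv (U i * (U i)ᵀ) g)
      ≤ f x - 1 / (2 * β * K) * ‖g‖ ^ 2 := by
    rw [div_mul_eq_mul_div, one_mul, div_le_iff₀ hKR]
    calc ∑ i, f (x - s • mv (U i * (U i)ᵀ) g)
        ≤ (K : ℝ) * f x - 1 / (2 * β) * ‖g‖ ^ 2 := hsum2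
      _ = (f x - 1 / (2 * β * K) * ‖g‖ ^ 2) * K := by field_simp
  have hnn : (0:ℝ) < 2 * β * K := by positivity
  have hfin : f x - 1 / (2 * β * K) * ‖g‖ ^ 2 - fstar
      ≤ (1 - α / (K * β)) * (f x - fstar) := by
    have h1 : 1 / (2 * β * K) * (2 * α * (f x - fstar)) ≤ 1 / (2 * β * K) * ‖g‖ ^ 2 :=
      mul_le_mul_of_nonneg_left hgsq (by positivity)
    have h2 : 1 / (2 * β * K) * (2 * α * (f x - fstar)) = α / (K * β) * (f x - fstar) := by
      field_simp
    nlinarith [h1, h2]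
  calc (1 / (K : ℝ)) * ∑ i, f (x - s • mv (U i * (U i)ᵀ) g) - fstar
      ≤ f x - 1 / (2 * β * K) * ‖g‖ ^ 2 - fstar := by linarith [hmain]
    _ ≤ (1 - α / (K * β)) * (f x - fstar) := hfin
end
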